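/- arXiv:2504.11266 — 2 statements merged into one kernel-verified Lean document; each statement's English description precedes it below -/
import Mathlib

section
/- For any three positive real numbers a, b, c, there exists a unique triple of positive reals (α, β, γ) satisfying the right-angled hyperbolic hexagon relation cosh(c) = sinh(α) sinh(β) cosh(γ) - cosh(α) cosh(β), together with the two cyclic analogues; equivalently, given side lengths a, b, c of the three non-adjacent sides, the opposite side length γ is uniquely determined by cosh(γ) = (cosh(c) + cosh(a) cosh(b)) / (sinh(a) sinh(b)). -/
open Real

lemma exists_unique_pos_cosh_eq {x : ℝ} (hx : 1 < x) : ∃! γ : ℝ, 0 < γ ∧ cosh γ = x :=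
  ⟨arcosh x, ⟨arcosh_pos hx, cosh_arcosh hx.le⟩,
    fun _ ⟨hγ, hγx⟩ => by rw [← hγx, arcosh_cosh hγ.le]⟩

-- The gap is `cosh c + cosh (a - b) ≥ 2`.
lemma sinh_mul_sinh_lt_cosh_add_cosh_mul_cosh (a b c : ℝ) :
    sinh a * sinh b < cosh c + cosh a * cosh b := by
  have := cosh_sub a b
  linarith [one_le_cosh c, one_le_cosh (a - b)]

theorem stmt2_general (a b c : ℝ) (ha : 0 < a) (hb : 0 < b) :
    ∃! γ : ℝ, 0 < γ ∧
      Real.cosh γ =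
        (Real.cosh c + Real.cosh a * Real.cosh b) /
          (Real.sinh a * Real.sinh b) := by
  have hden : 0 < sinh a * sinh b := mul_pos (sinh_pos_iff.2 ha) (sinh_pos_iff.2 hb)
  exact exists_unique_pos_cosh_eq
    ((one_lt_div hden).2 (sinh_mul_sinh_lt_cosh_add_cosh_mul_cosh a b c))

theorem stmt2 (a b c : ℝ) (ha : 0 < a) (hb : 0 < b) (hc : 0 < c) :
    ∃! γ : ℝ, 0 < γ ∧
      Real.cosh γ =
        (Real.cosh c + Real.cosh a * Real.cosh b) /
          (Real.sinh a * Real.sinh b) :=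
  stmt2_general a b c ha hb
end

section
/- Let f : ℝⁿ → ℝ be a differentiable strictly convex function with a critical point. Then f is coercive: f(x) → +∞ as ‖x‖ → +∞. -/
/-!
A critical point `q` of a convex function is a global minimum, and strict convexity makes it
the unique one, so by compactness `f` exceeds `f q` by some `m > 0` on the unit sphere around `q`.
Convexity along the ray from `q` through `x` then gives `f x ≥ f q + m ‖x - q‖` outside the unit
ball.
-/

open Filter Metric Set

variable {E : Type*} [NormedAddCommGroup E] [NormedSpace ℝ E] {f : E → ℝ} {q : E}

theorem ConvexOn.isMinOn_of_hasFDerivAt_eq_zero (hf : ConvexOn ℝ univ f)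
    (hq : HasFDerivAt f (0 : E →L[ℝ] ℝ) q) : IsMinOn f univ q := by
  refine isMinOn_univ_iff.mpr fun x ↦ ?_
  let ℓ : ℝ →ᵃ[ℝ] E := AffineMap.lineMap q x
  have hline : ConvexOn ℝ univ (f ∘ ℓ) := by simpa using hf.comp_affineMap ℓ
  have hderiv : HasDerivAt (f ∘ ℓ) 0 0 := by
    have hℓ : HasDerivAt ℓ (x - q) 0 := AffineMap.hasDerivAt_lineMap
    have hq' : HasFDerivAt f (0 : E →L[ℝ] ℝ) (ℓ 0) := by simpa [ℓ] using hq
    simpa using hq'.comp_hasDerivAt (0 : ℝ) hℓ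
  have := hline.le_slope_of_hasDerivAt (mem_univ 0) (mem_univ 1) one_pos hderiv
  simpa [slope_def_field, ℓ] using this

theorem StrictConvexOn.lt_of_isMinOn {s : Set E} (hf : StrictConvexOn ℝ s f)
    (hq : IsMinOn f s q) (hqs : q ∈ s) {y : E} (hys : y ∈ s) (hyq : y ≠ q) : f q < f y :=
  (hq hys).lt_of_ne fun hfy ↦ hyq <|
    hf.eq_of_isMinOn (fun _ hz ↦ hfy ▸ hq hz) hq hys hqs

theorem ConvexOn.add_dist_mul_le_of_forall_sphere (hf : ConvexOn ℝ univ f) {r c : ℝ} (hr : 0 < r)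
    (hsphere : ∀ y ∈ sphere q r, f q + c ≤ f y) {x : E} (hx : r ≤ dist x q) :
    f q + dist x q / r * c ≤ f x := by
  set d := dist x q
  have hd : 0 < d := hr.trans_le hx
  set t := r / d
  have ht0 : 0 < t := div_pos hr hd
  have ht1 : t ≤ 1 := (div_le_one hd).mpr hx
  have hy : (1 - t) • q + t • x ∈ sphere q r := by
    rw [mem_sphere, dist_eq_norm, show (1 - t) • q + t • x - q = t • (x - q) by module,
      norm_smul, Real.norm_of_nonneg ht0.le, ← dist_eq_norm]
    exact div_mul_cancel₀ r hd.ne'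
  have hconv : f ((1 - t) • q + t • x) ≤ (1 - t) * f q + t * f x :=
    hf.2 (mem_univ q) (mem_univ x) (by linarith) ht0.le (by ring)
  have hc : c ≤ t * (f x - f q) := by linarith [hsphere _ hy]
  have hdt : d / r * t = 1 := by simp only [t]; field_simp
  calc f q + d / r * c ≤ f q + d / r * (t * (f x - f q)) := by gcongr
    _ = f x := by rw [← mul_assoc, hdt]; ring

theorem StrictConvexOn.tendsto_cocompact_atTop [ProperSpace E] (hf : StrictConvexOn ℝ univ f)
    (hcont : Continuous f) (hq : IsMinOn f univ q) : Tendsto f (cocompact E) atTop := by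
  rcases subsingleton_or_nontrivial E with hE | hE
  · simp [cocompact_eq_bot]
  obtain ⟨y₀, hy₀, hy₀_min⟩ := (isCompact_sphere q 1).exists_isMinOn
    (NormedSpace.sphere_nonempty.mpr zero_le_one) hcont.continuousOn
  have hgap : 0 < f y₀ - f q :=
    sub_pos.mpr <| hf.lt_of_isMinOn hq (mem_univ q) (mem_univ y₀) (ne_of_mem_sphere hy₀ one_ne_zero)
  have hdist := tendsto_dist_right_cocompact_atTop q
  have hgrowth : ∀ᶠ x in cocompact E, f q + dist x q / 1 * (f y₀ - f q) ≤ f x :=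
    (hdist.eventually_ge_atTop 1).mono fun x hx ↦
      hf.convexOn.add_dist_mul_le_of_forall_sphere one_pos
        (fun y hy ↦ by linarith [isMinOn_iff.mp hy₀_min y hy]) hx
  exact tendsto_atTop_mono' _ hgrowth <| tendsto_atTop_add_const_left _ _ <|
    (hdist.atTop_div_const one_pos).atTop_mul_const hgap

theorem stmt9 {n : ℕ} (f : EuclideanSpace ℝ (Fin n) → ℝ)
    (hdiff : Differentiable ℝ f)
    (hconv : StrictConvexOn ℝ Set.univ f)
    (q : EuclideanSpace ℝ (Fin n)) (hq : fderiv ℝ f q = 0) :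
    Filter.Tendsto f (Filter.cocompact (EuclideanSpace ℝ (Fin n)))
      Filter.atTop :=
  hconv.tendsto_cocompact_atTop hdiff.continuous <|
    hconv.convexOn.isMinOn_of_hasFDerivAt_eq_zero (hq ▸ (hdiff q).hasFDerivAt)
end
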